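/- For every integer k ≥ 3, every vertex x of G_k, and every α ∈ {1,...,k}, in every (x,α)-CGC of G_k that uses k+1 colors, each of the four vertices u, u', v, v' receives a color in {1,...,k}. -/

import Mathlib

open SimpleGraph

/-- One step of the greedy coloring algorithm: color the vertex `w` with the smallest
positive integer not already used on one of its (already colored) neighbours.
Color `0` means "not yet colored". -/
noncomputable def greedyStep {V : Type*} [DecidableEq V] (G : SimpleGraph V)
    (f : V → ℕ) (w : V) : V → ℕ :=
  Function.update f w (sInf {n : ℕ | 0 < n ∧ ∀ z, G.Adj w z → f z ≠ n})

/-- The coloring obtained by greedily coloring the vertices of the list `l` in order,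
starting from the partial coloring `f₀`. -/
noncomputable def greedyFrom {V : Type*} [DecidableEq V] (G : SimpleGraph V)
    (f₀ : V → ℕ) (l : List V) : V → ℕ :=
  l.foldl (greedyStep G) f₀

/-- The greedy coloring of the ordering `l` (all vertices initially uncolored). -/
noncomputable def greedy {V : Type*} [DecidableEq V] (G : SimpleGraph V)
    (l : List V) : V → ℕ :=
  greedyFrom G (fun _ => 0) l

/-- `l` is a connected ordering of the vertices of `G`: it lists every vertex exactly once,
and every vertex other than the first has a neighbour occurring earlier in the list. -/
def IsConnectedOrder {V : Type*} (G : SimpleGraph V) (l : List V) : Prop :=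
  l.Nodup ∧ (∀ w : V, w ∈ l) ∧
    ∀ i : Fin l.length, 0 < (i : ℕ) →
      ∃ j : Fin l.length, (j : ℕ) < (i : ℕ) ∧ G.Adj (l.get i) (l.get j)

/-- `f` is a connected greedy coloring (CGC) of `G`. -/
def IsCGC {V : Type*} [DecidableEq V] (G : SimpleGraph V) (f : V → ℕ) : Prop :=
  ∃ l : List V, IsConnectedOrder G l ∧ f = greedy G l

/-- `f` is an `(x, α)`-connected greedy coloring of `G`: it is obtained from a connected
ordering starting at `x` by coloring `x` with `α` and then coloring each subsequent
vertex with the smallest positive integer not appearing on its already-colored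
neighbours. -/
def IsCGCFrom {V : Type*} [DecidableEq V] (G : SimpleGraph V) (x : V) (α : ℕ)
    (f : V → ℕ) : Prop :=
  ∃ l : List V, IsConnectedOrder G (x :: l) ∧
    f = greedyFrom G (Function.update (fun _ => 0) x α) l

/-- `f` uses exactly `k` colors. -/
def UsesColors {V : Type*} (f : V → ℕ) (k : ℕ) : Prop :=
  ∃ s : Finset ℕ, (∀ w, f w ∈ s) ∧ (∀ c ∈ s, ∃ w, f w = c) ∧ s.card = k

/-- The connected chromatic number of `G`: the least `k` such that some connected greedy
coloring of `G` only uses colors in `{1, …, k}`. -/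
noncomputable def connChrom {V : Type*} [DecidableEq V] (G : SimpleGraph V) : ℕ :=
  sInf {k | ∃ f, IsCGC G f ∧ ∀ w, f w ≤ k}

/-- The vertices of the gadget `G_k`: three cliques `U`, `W` (called `V` in the paper)
and `M` of size `k` each (the distinguished vertex `w` of `M` is `M i` with `i.val = 0`),
together with four special vertices `u, u', v, v'`. -/
inductive GkVert (k : ℕ) where
  | U : Fin k → GkVert k
  | W : Fin k → GkVert k
  | M : Fin k → GkVert k
  | u : GkVert k
  | u' : GkVert k
  | v : GkVert k
  | v' : GkVert k
deriving DecidableEq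

/-- The gadget `G_k`: `U`, `W` and `M` are cliques, `u` and `u'` are complete to `U`,
`v` and `v'` are complete to `W`, `u` and `v` are complete to `M ∖ {w}`, and
`u'` and `v'` are adjacent to `w` (where `w` is the vertex `M i` with `i.val = 0`). -/
def Gk (k : ℕ) : SimpleGraph (GkVert k) :=
  SimpleGraph.fromRel (fun a b =>
    (∃ i j, a = GkVert.U i ∧ b = GkVert.U j) ∨
    (∃ i j, a = GkVert.W i ∧ b = GkVert.W j) ∨
    (∃ i j, a = GkVert.M i ∧ b = GkVert.M j) ∨
    (∃ i, a = GkVert.u ∧ b = GkVert.U i) ∨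
    (∃ i, a = GkVert.u' ∧ b = GkVert.U i) ∨
    (∃ i, a = GkVert.v ∧ b = GkVert.W i) ∨
    (∃ i, a = GkVert.v' ∧ b = GkVert.W i) ∨
    (∃ i : Fin k, i.val ≠ 0 ∧ a = GkVert.u ∧ b = GkVert.M i) ∨
    (∃ i : Fin k, i.val ≠ 0 ∧ a = GkVert.v ∧ b = GkVert.M i) ∨
    (∃ i : Fin k, i.val = 0 ∧ a = GkVert.u' ∧ b = GkVert.M i) ∨
    (∃ i : Fin k, i.val = 0 ∧ a = GkVert.v' ∧ b = GkVert.M i))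

/-!
In a connected greedy coloring started at `x`, every vertex `y ≠ x` sees each color below `f y`
on an earlier neighbour; with `k + 1` colors this forces all colors into `{1, …, k + 1}`. The
cliques `U` and `V` then leave exactly one color for `u, u'` and one for `v, v'`, and since
`u' ~ w` and `u ~ M ∖ {w}` (likewise for `v', v`), that color is also the one missing on `M`:
all four vertices share it. If it were `k + 1`, consider the first vertex of the wing
`U ∪ {u, u'}` in the ordering, assuming `x` lies outside it. A vertex of `U` has no earlier
neighbour; `u` would have to see the color `f w ≤ k` on `M ∖ {w}`, impossible in the clique `M`;
`u'` would have to see both colors `1` and `2` on its only earlier neighbour `w`. So `x` lies in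
the `U`-wing, and symmetrically in the `V`-wing, which is absurd.
-/

open Function

lemma List.exists_split_at_first {α : Type*} {l : List α} {p : α → Prop} (h : ∃ y ∈ l, p y) :
    ∃ pre y post, l = pre ++ y :: post ∧ p y ∧ ∀ z ∈ pre, ¬p z := by
  classical
  obtain ⟨y, hy⟩ :=
    Option.isSome_iff_exists.1 (List.find?_isSome (p := (p ·)).2 (by simpa using h))
  obtain ⟨hpy, pre, post, rfl, hpre⟩ := List.find?_eq_some_iff_append.1 hy
  exact ⟨pre, y, post, rfl, by simpa using hpy, fun z hz => by simpa using hpre z hz⟩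

lemma eq_of_notMem_range_of_card_eq_succ {ι β : Type*} [Fintype ι] [DecidableEq β]
    {g : ι → β} (hg : Injective g) {S : Finset β} (hS : S.card = Fintype.card ι + 1)
    (hgS : ∀ i, g i ∈ S) {c c' : β} (hc : c ∈ S) (hc' : c' ∈ S) (hgc : ∀ i, g i ≠ c)
    (hgc' : ∀ i, g i ≠ c') : c = c' := by
  by_contra hne
  have hsub : insert c (insert c' (Finset.univ.image g)) ⊆ S := by
    simp only [Finset.insert_subset_iff, Finset.image_subset_iff]
    exact ⟨hc, hc', fun i _ => hgS i⟩
  have := Finset.card_le_card hsub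
  rw [Finset.card_insert_of_notMem (by simpa [hne] using hgc),
    Finset.card_insert_of_notMem (by simpa using hgc'),
    Finset.card_image_of_injective _ hg, Finset.card_univ] at this
  omega

section ConnectedOrder

variable {V : Type*} {G : SimpleGraph V}

lemma IsConnectedOrder.finite {l : List V} (h : IsConnectedOrder G l) : Finite V :=
  Set.finite_univ_iff.1 (l.finite_toSet.subset fun w _ => h.2.1 w)

lemma IsConnectedOrder.exists_adj_of_eq_append {pre post : List V} {y : V}
    (h : IsConnectedOrder G (pre ++ y :: post)) (hpre : pre ≠ []) : ∃ z ∈ pre, G.Adj y z := by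
  obtain ⟨⟨j, hj⟩, hji, hadj⟩ := h.2.2 ⟨pre.length, by simp⟩ (List.length_pos_iff.2 hpre)
  simp only [List.get_eq_getElem, List.getElem_append_right le_rfl, Nat.sub_self,
    List.getElem_cons_zero, List.getElem_append_left hji] at hadj
  exact ⟨_, List.getElem_mem hji, hadj⟩

end ConnectedOrder

section Nodup

variable {V : Type*} {x y : V} {pre post : List V}

lemma notMem_of_nodup_cons_append_cons (hnd : (x :: (pre ++ y :: post)).Nodup) : y ∉ post := by
  rw [← List.cons_append] at hnd
  exact (List.nodup_cons.1 hnd.of_append_right).1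

lemma notMem_cons_of_mem_cons_of_nodup (hnd : (x :: (pre ++ y :: post)).Nodup) {z : V}
    (hz : z ∈ x :: pre) : z ∉ y :: post := by
  rw [← List.cons_append] at hnd
  exact List.disjoint_of_nodup_append hnd hz

end Nodup

section Greedy

variable {V : Type*} [DecidableEq V] {G : SimpleGraph V}

lemma greedyStep_apply_of_ne {f : V → ℕ} {y z : V} (h : z ≠ y) : greedyStep G f y z = f z :=
  update_of_ne h _ _

lemma greedyStep_apply_self_pos_and_ne [Finite V] (f : V → ℕ) (y : V) :
    0 < greedyStep G f y y ∧ ∀ z, G.Adj y z → f z ≠ greedyStep G f y y := by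
  rw [greedyStep, update_self]
  obtain ⟨b, hb⟩ := (Set.finite_range f).bddAbove
  refine Nat.sInf_mem (s := {n | 0 < n ∧ ∀ z, G.Adj y z → f z ≠ n}) ⟨b + 1, b.succ_pos, ?_⟩
  intro z _ h
  have := hb ⟨z, rfl⟩
  omega

lemma exists_adj_eq_of_lt_greedyStep {f : V → ℕ} {y : V} {d : ℕ} (hd : 0 < d)
    (hlt : d < greedyStep G f y y) : ∃ z, G.Adj y z ∧ f z = d := by
  rw [greedyStep, update_self] at hlt
  simpa [hd] using Nat.notMem_of_lt_sInf hlt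

lemma greedyFrom_apply_of_notMem (f₀ : V → ℕ) {l : List V} {z : V} (hz : z ∉ l) :
    greedyFrom G f₀ l z = f₀ z := by
  induction l generalizing f₀ with
  | nil => rfl
  | cons a t ih =>
    rw [List.mem_cons, not_or] at hz
    exact (ih _ hz.2).trans (greedyStep_apply_of_ne hz.1)

lemma greedyFrom_append_cons (f₀ : V → ℕ) (pre post : List V) (y : V) :
    greedyFrom G f₀ (pre ++ y :: post) =
      greedyFrom G (greedyStep G (greedyFrom G f₀ pre) y) post := by
  simp [greedyFrom, List.foldl_append]

lemma greedyFrom_append_cons_apply_self (f₀ : V → ℕ) {pre post : List V} {y : V}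
    (hy : y ∉ post) :
    greedyFrom G f₀ (pre ++ y :: post) y = greedyStep G (greedyFrom G f₀ pre) y y := by
  rw [greedyFrom_append_cons, greedyFrom_apply_of_notMem _ hy]

lemma greedyFrom_append_cons_apply_of_notMem (f₀ : V → ℕ) {pre post : List V} {y z : V}
    (hz : z ∉ y :: post) :
    greedyFrom G f₀ (pre ++ y :: post) z = greedyFrom G f₀ pre z := by
  rw [List.mem_cons, not_or] at hz
  rw [greedyFrom_append_cons, greedyFrom_apply_of_notMem _ hz.2, greedyStep_apply_of_ne hz.1]

variable {x : V} {α : ℕ} {pre post : List V} {y : V}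

lemma greedyFrom_start_pos_and_ne [Finite V] (hnd : (x :: (pre ++ y :: post)).Nodup) :
    0 < greedyFrom G (update (fun _ => 0) x α) (pre ++ y :: post) y ∧
      ∀ z ∈ x :: pre, G.Adj y z →
        greedyFrom G (update (fun _ => 0) x α) (pre ++ y :: post) z ≠
          greedyFrom G (update (fun _ => 0) x α) (pre ++ y :: post) y := by
  rw [greedyFrom_append_cons_apply_self _ (notMem_of_nodup_cons_append_cons hnd)]
  refine ⟨(greedyStep_apply_self_pos_and_ne _ _).1, fun z hz hadj => ?_⟩
  rw [greedyFrom_append_cons_apply_of_notMem _ (notMem_cons_of_mem_cons_of_nodup hnd hz)]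
  exact (greedyStep_apply_self_pos_and_ne _ _).2 z hadj

lemma exists_adj_mem_prefix_of_lt (hnd : (x :: (pre ++ y :: post)).Nodup) {d : ℕ} (hd : 0 < d)
    (hlt : d < greedyFrom G (update (fun _ => 0) x α) (pre ++ y :: post) y) :
    ∃ z ∈ x :: pre, G.Adj y z ∧
      greedyFrom G (update (fun _ => 0) x α) (pre ++ y :: post) z = d := by
  rw [greedyFrom_append_cons_apply_self _ (notMem_of_nodup_cons_append_cons hnd)] at hlt
  obtain ⟨z, hadj, hz⟩ := exists_adj_eq_of_lt_greedyStep hd hlt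
  have hzpre : z ∈ x :: pre := by
    by_contra h
    rw [List.mem_cons, not_or] at h
    rw [greedyFrom_apply_of_notMem _ h.2, update_of_ne h.1] at hz
    omega
  refine ⟨z, hzpre, hadj, ?_⟩
  rwa [greedyFrom_append_cons_apply_of_notMem _ (notMem_cons_of_mem_cons_of_nodup hnd hzpre)]

end Greedy

namespace IsCGCFrom

variable {V : Type*} [DecidableEq V] {G : SimpleGraph V} {x : V} {α : ℕ} {f : V → ℕ}

lemma apply_start (hf : IsCGCFrom G x α f) : f x = α := by
  obtain ⟨l, hL, rfl⟩ := hf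
  rw [greedyFrom_apply_of_notMem _ (List.nodup_cons.1 hL.1).1, update_self]

lemma pos (hf : IsCGCFrom G x α f) (hα : 0 < α) (y : V) : 0 < f y := by
  by_cases hyx : y = x
  · rwa [hyx, hf.apply_start]
  obtain ⟨l, hL, rfl⟩ := hf
  have := hL.finite
  obtain ⟨pre, post, rfl⟩ := List.append_of_mem ((List.mem_cons.1 (hL.2.1 y)).resolve_left hyx)
  exact (greedyFrom_start_pos_and_ne hL.1).1

lemma ne_of_adj (hf : IsCGCFrom G x α f) {y z : V} (hadj : G.Adj y z) : f y ≠ f z := by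
  obtain ⟨l, hL, rfl⟩ := hf
  have := hL.finite
  rcases List.mem_cons.1 (hL.2.1 y) with rfl | hy
  · obtain ⟨pre, post, rfl⟩ :=
      List.append_of_mem ((List.mem_cons.1 (hL.2.1 z)).resolve_left hadj.ne.symm)
    exact (greedyFrom_start_pos_and_ne hL.1).2 _ List.mem_cons_self hadj.symm
  obtain ⟨pre, post, rfl⟩ := List.append_of_mem hy
  have hz : z ∈ (x :: pre) ++ y :: post := hL.2.1 z
  rcases List.mem_append.1 hz with hz | hz
  · exact ((greedyFrom_start_pos_and_ne hL.1).2 z hz hadj).symm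
  rcases List.mem_cons.1 hz with rfl | hz
  · exact absurd hadj (G.irrefl)
  · obtain ⟨pre', post', rfl⟩ := List.append_of_mem hz
    rw [show pre ++ y :: (pre' ++ z :: post') = (pre ++ y :: pre') ++ z :: post' by simp] at hL ⊢
    exact (greedyFrom_start_pos_and_ne hL.1).2 y (by simp) hadj.symm

lemma exists_entry_vertex (hf : IsCGCFrom G x α f) {p : V → Prop} (hx : ¬p x) {y : V} (hy : p y) :
    ∃ y, p y ∧ (∃ z, G.Adj y z ∧ ¬p z) ∧
      ∀ d, 0 < d → d < f y → ∃ z, G.Adj y z ∧ ¬p z ∧ f z = d := by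
  obtain ⟨l, hL, rfl⟩ := hf
  have hyl : y ∈ l := (List.mem_cons.1 (hL.2.1 y)).resolve_left (by rintro rfl; exact hx hy)
  obtain ⟨pre, y', post, rfl, hy', hpre⟩ := List.exists_split_at_first ⟨y, hyl, hy⟩
  have hout : ∀ z ∈ x :: pre, ¬p z := by
    simp only [List.mem_cons, forall_eq_or_imp]
    exact ⟨hx, hpre⟩
  obtain ⟨z, hz, hadj⟩ :=
    IsConnectedOrder.exists_adj_of_eq_append (pre := x :: pre) hL (List.cons_ne_nil _ _)
  refine ⟨y', hy', ⟨z, hadj, hout z hz⟩, fun d hd hlt => ?_⟩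
  obtain ⟨z, hz, hadj, hfz⟩ := exists_adj_mem_prefix_of_lt hL.1 hd hlt
  exact ⟨z, hadj, hout z hz, hfz⟩

lemma le_of_usesColors (hf : IsCGCFrom G x α f) {n : ℕ} (huse : UsesColors f n) (hα : α ≤ n)
    (y : V) : f y ≤ n := by
  obtain ⟨s, hfs, -, rfl⟩ := huse
  by_cases hyx : y = x
  · rwa [hyx, hf.apply_start]
  obtain ⟨y, rfl, -, hcover⟩ := hf.exists_entry_vertex (p := (· = y)) (Ne.symm hyx) rfl
  have hsub : Finset.Icc 1 (f y) ⊆ s := fun d hd => by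
    obtain ⟨hd1, hd2⟩ := Finset.mem_Icc.1 hd
    rcases hd2.lt_or_eq with hlt | rfl
    · obtain ⟨z, -, -, rfl⟩ := hcover d hd1 hlt
      exact hfs z
    · exact hfs y
  simpa using Finset.card_le_card hsub

end IsCGCFrom

namespace GkVert

variable {k : ℕ}

def clique : Bool → Fin k → GkVert k
  | true => U
  | false => W

def apex : Bool → GkVert k
  | true => u
  | false => v

def apex' : Bool → GkVert k
  | true => u'
  | false => v'

def InWing (b : Bool) (z : GkVert k) : Prop :=
  z = apex b ∨ z = apex' b ∨ ∃ i, z = clique b i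

lemma not_inWing_true_and_false {z : GkVert k} : ¬(InWing true z ∧ InWing false z) := by
  cases z <;> simp [InWing, apex, apex', clique]

end GkVert

namespace Gk

open GkVert

variable {k : ℕ} {b : Bool} {i j : Fin k} {z : GkVert k}

lemma adj_clique (h : i ≠ j) : (Gk k).Adj (clique b i) (clique b j) := by
  cases b <;> simp [Gk, clique, h]

lemma adj_M (h : i ≠ j) : (Gk k).Adj (M i) (M j) := by
  simp [Gk, h]

lemma adj_apex_clique : (Gk k).Adj (apex b) (clique b i) := by
  cases b <;> simp [Gk, clique, apex]

lemma adj_apex'_clique : (Gk k).Adj (apex' b) (clique b i) := by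
  cases b <;> simp [Gk, clique, apex']

lemma adj_apex_M (hi : i.val ≠ 0) : (Gk k).Adj (apex b) (M i) := by
  cases b <;> simp [Gk, apex, hi]

lemma adj_apex'_M (hi : i.val = 0) : (Gk k).Adj (apex' b) (M i) := by
  cases b <;> simp [Gk, apex', hi]

lemma inWing_of_adj_clique (h : (Gk k).Adj (clique b i) z) : InWing b z := by
  cases b <;> cases z <;> simp_all [Gk, InWing, clique, apex, apex']

lemma exists_eq_M_of_adj_apex (h : (Gk k).Adj (apex b) z) (hz : ¬InWing b z) :
    ∃ i : Fin k, i.val ≠ 0 ∧ z = M i := by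
  cases b <;> cases z <;> simp_all [Gk, InWing, clique, apex, apex']

lemma exists_eq_M_of_adj_apex' (h : (Gk k).Adj (apex' b) z) (hz : ¬InWing b z) :
    ∃ i : Fin k, i.val = 0 ∧ z = M i := by
  cases b <;> cases z <;> simp_all [Gk, InWing, clique, apex, apex']

variable {f : GkVert k → ℕ}

lemma apex'_color_eq (hproper : ∀ y z, (Gk k).Adj y z → f y ≠ f z)
    (hrange : ∀ y, f y ∈ Finset.Icc 1 (k + 1)) (b : Bool) : f (apex' b) = f (apex b) :=
  eq_of_notMem_range_of_card_eq_succ (g := f ∘ clique b)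
    (fun i j h => by_contra fun hij => hproper _ _ (adj_clique hij) h) (by simp)
    (fun i => hrange _) (hrange _) (hrange _)
    (fun i => (hproper _ _ adj_apex'_clique).symm) (fun i => (hproper _ _ adj_apex_clique).symm)

lemma apex_color_eq (hproper : ∀ y z, (Gk k).Adj y z → f y ≠ f z)
    (hrange : ∀ y, f y ∈ Finset.Icc 1 (k + 1)) : f (apex false) = f (apex true) := by
  have hM : ∀ b i, f (M i) ≠ f (apex b) := fun b i => by
    by_cases hi : i.val = 0
    · rw [← apex'_color_eq hproper hrange]
      exact (hproper _ _ (adj_apex'_M hi)).symm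
    · exact (hproper _ _ (adj_apex_M hi)).symm
  exact eq_of_notMem_range_of_card_eq_succ (g := f ∘ M)
    (fun i j h => by_contra fun hij => hproper _ _ (adj_M hij) h) (by simp)
    (fun i => hrange _) (hrange _) (hrange _) (hM false) (hM true)

lemma inWing_start_of_apex_color_eq {x : GkVert k} {α : ℕ} (hf : IsCGCFrom (Gk k) x α f)
    (hk : 2 ≤ k) (hrange : ∀ y, f y ∈ Finset.Icc 1 (k + 1)) {b : Bool}
    (hc : f (apex b) = k + 1) : InWing b x := by
  have hc' : f (apex' b) = k + 1 := (apex'_color_eq (fun _ _ => hf.ne_of_adj) hrange b).trans hc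
  by_contra hx
  obtain ⟨y, hy, ⟨z, hyz, hz⟩, hcover⟩ := hf.exists_entry_vertex hx (p := InWing b) (Or.inl rfl)
  rcases hy with rfl | rfl | ⟨i, rfl⟩
  · set w : GkVert k := M ⟨0, by omega⟩
    have hw : f w < k + 1 := by
      refine lt_of_le_of_ne (Finset.mem_Icc.1 (hrange w)).2 ?_
      rw [← hc']
      exact (hf.ne_of_adj (adj_apex'_M rfl)).symm
    obtain ⟨z, hadj, hzw, hfz⟩ := hcover (f w) (Finset.mem_Icc.1 (hrange w)).1 (hc ▸ hw)
    obtain ⟨i, hi, rfl⟩ := exists_eq_M_of_adj_apex hadj hzw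
    exact hf.ne_of_adj (adj_M fun h => hi (by rw [h])) hfz
  · obtain ⟨z₁, h₁, hz₁, hf₁⟩ := hcover 1 one_pos (by omega)
    obtain ⟨z₂, h₂, hz₂, hf₂⟩ := hcover 2 two_pos (by omega)
    obtain ⟨i₁, hi₁, rfl⟩ := exists_eq_M_of_adj_apex' h₁ hz₁
    obtain ⟨i₂, hi₂, rfl⟩ := exists_eq_M_of_adj_apex' h₂ hz₂
    obtain rfl : i₁ = i₂ := Fin.ext (hi₁.trans hi₂.symm)
    omega
  · exact hz (inWing_of_adj_clique hyz)

end Gk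

theorem statement4 (k : ℕ) (hk : 3 ≤ k) (x : GkVert k) (α : ℕ)
    (hα : α ∈ Finset.Icc 1 k) (f : GkVert k → ℕ)
    (hf : IsCGCFrom (Gk k) x α f) (huse : UsesColors f (k + 1)) :
    f GkVert.u ∈ Finset.Icc 1 k ∧ f GkVert.u' ∈ Finset.Icc 1 k ∧
      f GkVert.v ∈ Finset.Icc 1 k ∧ f GkVert.v' ∈ Finset.Icc 1 k := by
  obtain ⟨hα1, hαk⟩ := Finset.mem_Icc.1 hα
  have hproper : ∀ y z, (Gk k).Adj y z → f y ≠ f z := fun _ _ => hf.ne_of_adj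
  have hrange : ∀ y, f y ∈ Finset.Icc 1 (k + 1) := fun y =>
    Finset.mem_Icc.2 ⟨hf.pos hα1 y, hf.le_of_usesColors huse (by omega) y⟩
  have hu' : f GkVert.u' = f GkVert.u := Gk.apex'_color_eq hproper hrange true
  have hv' : f GkVert.v' = f GkVert.v := Gk.apex'_color_eq hproper hrange false
  have hv : f GkVert.v = f GkVert.u := Gk.apex_color_eq hproper hrange
  have hu : f GkVert.u ∈ Finset.Icc 1 k := by
    obtain ⟨hu1, huk⟩ := Finset.mem_Icc.1 (hrange GkVert.u)
    refine Finset.mem_Icc.2 ⟨hu1, Nat.le_of_lt_succ (huk.lt_of_ne fun hc => ?_)⟩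
    exact GkVert.not_inWing_true_and_false
      ⟨Gk.inWing_start_of_apex_color_eq hf (by omega) hrange (b := true) hc,
        Gk.inWing_start_of_apex_color_eq hf (by omega) hrange (b := false) (hv.trans hc)⟩
  exact ⟨hu, hu' ▸ hu, hv ▸ hu, hv' ▸ hv ▸ hu⟩
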